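/- arXiv:1603.03374 — 2 statements merged into one kernel-verified Lean document; each statement's English description precedes it below -/
import Mathlib

section
/- If Γ ⊢ ⋁(Φ ∪ {B}) and Γ ⊢ ⋁(Φ ∪ {C}) are both derivable intuitionistically, then Γ ⊢ ⋁(Φ ∪ {B ∧ C}) is derivable intuitionistically. -/
/-! A deep embedding of the infinitary language `L_{∞ω}` (de Bruijn indices for
bound variables, natural numbers naming free variables and predicate symbols),
together with Tait–Gentzen sequent calculi: a classical one with ordinal bounds
on proof-height and cut-rank, and an intuitionistic one (at most one succedent
formula). -/

/-- Terms: just variables. -/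
inductive Tm : Type where
  | var : ℕ → Tm

/-- Formulae of `L_{∞ω}`: atoms, `∧`, `∨`, `→`, `¬`, `∀`, `∃` and set-indexed
infinitary conjunctions `⋀` and disjunctions `⋁`. -/
inductive Fml : Type 1 where
  | atom : ℕ → List Tm → Fml
  | and : Fml → Fml → Fml
  | or : Fml → Fml → Fml
  | imp : Fml → Fml → Fml
  | neg : Fml → Fml
  | all : Fml → Fml
  | ex : Fml → Fml
  | conj : (ι : Type) → (ι → Fml) → Fml
  | disj : (ι : Type) → (ι → Fml) → Fml

namespace Fml

/-- The (ordinal) rank of a formula; proper subformulae have strictly smaller rank. -/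
noncomputable def rank : Fml → Ordinal.{0}
  | atom _ _ => 0
  | and A B => max A.rank B.rank + 1
  | or A B => max A.rank B.rank + 1
  | imp A B => max A.rank B.rank + 1
  | neg A => A.rank + 1
  | all A => A.rank + 1
  | ex A => A.rank + 1
  | conj _ f => Ordinal.lsub fun i => (f i).rank
  | disj _ f => Ordinal.lsub fun i => (f i).rank

end Fml

/-- Substitution in terms. -/
def Tm.subst (σ : ℕ → Tm) : Tm → Tm
  | .var n => σ n

/-- Lifting a substitution under a binder. -/
def liftSub (σ : ℕ → Tm) : ℕ → Tm
  | 0 => .var 0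
  | n + 1 => match σ n with | .var m => .var (m + 1)

/-- Simultaneous substitution in formulae. -/
def Fml.subst (σ : ℕ → Tm) : Fml → Fml
  | .atom p ts => .atom p (ts.map (Tm.subst σ))
  | .and A B => .and (A.subst σ) (B.subst σ)
  | .or A B => .or (A.subst σ) (B.subst σ)
  | .imp A B => .imp (A.subst σ) (B.subst σ)
  | .neg A => .neg (A.subst σ)
  | .all A => .all (A.subst (liftSub σ))
  | .ex A => .ex (A.subst (liftSub σ))
  | .conj ι f => .conj ι fun i => (f i).subst σ
  | .disj ι f => .disj ι fun i => (f i).subst σ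

/-- `A.subst0 t` plugs the term `t` for the outermost bound variable of `A`;
if `B(x) = all A` then `B(t) = A.subst0 t`. -/
def Fml.subst0 (A : Fml) (t : Tm) : Fml :=
  A.subst fun n => match n with | 0 => t | n + 1 => .var n

/-- Substituting the term `t` for the free variable `a`. -/
def Fml.substFree (A : Fml) (a : ℕ) (t : Tm) : Fml :=
  A.subst fun n => if n = a then t else .var n

/-- Free variables of a term. -/
def Tm.fv : Tm → Set ℕ
  | .var n => {n}

/-- Free variables of a formula. -/
def Fml.fv : Fml → Set ℕ
  | .atom _ ts => {n | ∃ t ∈ ts, n ∈ t.fv}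
  | .and A B => A.fv ∪ B.fv
  | .or A B => A.fv ∪ B.fv
  | .imp A B => A.fv ∪ B.fv
  | .neg A => A.fv
  | .all A => {n | n + 1 ∈ A.fv}
  | .ex A => {n | n + 1 ∈ A.fv}
  | .conj _ f => {n | ∃ i, n ∈ (f i).fv}
  | .disj _ f => {n | ∃ i, n ∈ (f i).fv}

/-- A sentence: a formula without free variables. -/
def Fml.Closed (A : Fml) : Prop := A.fv = ∅

/-- The classical sequent calculus for `L_{∞ω}`: `Derives α ρ Γ Δ` means the sequent
`Γ ⊢ Δ` has a derivation of height `≤ α` all of whose cut formulae have rank `< ρ`. -/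
inductive Derives : Ordinal.{0} → Ordinal.{0} → List Fml → List Fml → Prop where
  | ax {α ρ Γ Δ A} : A ∈ Γ → A ∈ Δ → Derives α ρ Γ Δ
  | wk {α ρ Γ Γ' Δ Δ'} : (∀ A ∈ Γ, A ∈ Γ') → (∀ A ∈ Δ, A ∈ Δ') →
      Derives α ρ Γ Δ → Derives α ρ Γ' Δ'
  | cut {α ρ Γ Δ C β₁ β₂} : β₁ < α → β₂ < α → Fml.rank C < ρ →
      Derives β₁ ρ Γ (C :: Δ) → Derives β₂ ρ (C :: Γ) Δ → Derives α ρ Γ Δ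
  | negL {α ρ Γ Δ A β} : β < α → Derives β ρ Γ (A :: Δ) →
      Derives α ρ (.neg A :: Γ) Δ
  | negR {α ρ Γ Δ A β} : β < α → Derives β ρ (A :: Γ) Δ →
      Derives α ρ Γ (.neg A :: Δ)
  | impL {α ρ Γ Δ A B β₁ β₂} : β₁ < α → β₂ < α →
      Derives β₁ ρ Γ (A :: Δ) → Derives β₂ ρ (B :: Γ) Δ →
      Derives α ρ (.imp A B :: Γ) Δ
  | impR {α ρ Γ Δ A B β} : β < α → Derives β ρ (A :: Γ) (B :: Δ) →
      Derives α ρ Γ (.imp A B :: Δ)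
  | andL₁ {α ρ Γ Δ A B β} : β < α → Derives β ρ (A :: Γ) Δ →
      Derives α ρ (.and A B :: Γ) Δ
  | andL₂ {α ρ Γ Δ A B β} : β < α → Derives β ρ (B :: Γ) Δ →
      Derives α ρ (.and A B :: Γ) Δ
  | andR {α ρ Γ Δ A B β₁ β₂} : β₁ < α → β₂ < α →
      Derives β₁ ρ Γ (A :: Δ) → Derives β₂ ρ Γ (B :: Δ) →
      Derives α ρ Γ (.and A B :: Δ)
  | orL {α ρ Γ Δ A B β₁ β₂} : β₁ < α → β₂ < α →
      Derives β₁ ρ (A :: Γ) Δ → Derives β₂ ρ (B :: Γ) Δ →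
      Derives α ρ (.or A B :: Γ) Δ
  | orR₁ {α ρ Γ Δ A B β} : β < α → Derives β ρ Γ (A :: Δ) →
      Derives α ρ Γ (.or A B :: Δ)
  | orR₂ {α ρ Γ Δ A B β} : β < α → Derives β ρ Γ (B :: Δ) →
      Derives α ρ Γ (.or A B :: Δ)
  | allL {α ρ Γ Δ A t β} : β < α → Derives β ρ (A.subst0 t :: Γ) Δ →
      Derives α ρ (.all A :: Γ) Δ
  | allR {α ρ Γ Δ A a β} : β < α → a ∉ Fml.fv (.all A) →
      (∀ B ∈ Γ, a ∉ B.fv) → (∀ B ∈ Δ, a ∉ B.fv) →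
      Derives β ρ Γ (A.subst0 (.var a) :: Δ) → Derives α ρ Γ (.all A :: Δ)
  | exL {α ρ Γ Δ A a β} : β < α → a ∉ Fml.fv (.ex A) →
      (∀ B ∈ Γ, a ∉ B.fv) → (∀ B ∈ Δ, a ∉ B.fv) →
      Derives β ρ (A.subst0 (.var a) :: Γ) Δ → Derives α ρ (.ex A :: Γ) Δ
  | exR {α ρ Γ Δ A t β} : β < α → Derives β ρ Γ (A.subst0 t :: Δ) →
      Derives α ρ Γ (.ex A :: Δ)
  | conjL {α ρ Γ Δ ι f β} (i : ι) : β < α → Derives β ρ (f i :: Γ) Δ →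
      Derives α ρ (.conj ι f :: Γ) Δ
  | conjR {α ρ Γ Δ ι f} (β : ι → Ordinal.{0}) : (∀ i, β i < α) →
      (∀ i : ι, Derives (β i) ρ Γ (f i :: Δ)) → Derives α ρ Γ (.conj ι f :: Δ)
  | disjL {α ρ Γ Δ ι f} (β : ι → Ordinal.{0}) : (∀ i, β i < α) →
      (∀ i : ι, Derives (β i) ρ (f i :: Γ) Δ) → Derives α ρ (.disj ι f :: Γ) Δ
  | disjR {α ρ Γ Δ ι f β} (i : ι) : β < α → Derives β ρ Γ (f i :: Δ) →
      Derives α ρ Γ (.disj ι f :: Δ)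

/-- Classical derivability (with some height and some cut-rank). -/
def Derivable (Γ Δ : List Fml) : Prop := ∃ α ρ, Derives α ρ Γ Δ

/-- The intuitionistic sequent calculus for `L_{∞ω}`: sequents have at most one
formula on the right (`none` = empty succedent). -/
inductive DerivesI : List Fml → Option Fml → Prop where
  | ax {Γ A} : A ∈ Γ → DerivesI Γ (some A)
  | wk {Γ Γ' S} : (∀ A ∈ Γ, A ∈ Γ') → DerivesI Γ S → DerivesI Γ' S
  | wkR {Γ A} : DerivesI Γ none → DerivesI Γ (some A)
  | cut {Γ S C} : DerivesI Γ (some C) → DerivesI (C :: Γ) S → DerivesI Γ S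
  | negL {Γ A} : DerivesI Γ (some A) → DerivesI (.neg A :: Γ) none
  | negR {Γ A} : DerivesI (A :: Γ) none → DerivesI Γ (some (.neg A))
  | impL {Γ S A B} : DerivesI Γ (some A) → DerivesI (B :: Γ) S →
      DerivesI (.imp A B :: Γ) S
  | impR {Γ A B} : DerivesI (A :: Γ) (some B) → DerivesI Γ (some (.imp A B))
  | andL₁ {Γ S A B} : DerivesI (A :: Γ) S → DerivesI (.and A B :: Γ) S
  | andL₂ {Γ S A B} : DerivesI (B :: Γ) S → DerivesI (.and A B :: Γ) S
  | andR {Γ A B} : DerivesI Γ (some A) → DerivesI Γ (some B) →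
      DerivesI Γ (some (.and A B))
  | orL {Γ S A B} : DerivesI (A :: Γ) S → DerivesI (B :: Γ) S →
      DerivesI (.or A B :: Γ) S
  | orR₁ {Γ A B} : DerivesI Γ (some A) → DerivesI Γ (some (.or A B))
  | orR₂ {Γ A B} : DerivesI Γ (some B) → DerivesI Γ (some (.or A B))
  | allL {Γ S A t} : DerivesI (A.subst0 t :: Γ) S → DerivesI (.all A :: Γ) S
  | allR {Γ A a} : a ∉ Fml.fv (.all A) → (∀ B ∈ Γ, a ∉ B.fv) →
      DerivesI Γ (some (A.subst0 (.var a))) → DerivesI Γ (some (.all A))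
  | exL {Γ S A a} : a ∉ Fml.fv (.ex A) → (∀ B ∈ Γ, a ∉ B.fv) →
      (∀ B, S = some B → a ∉ B.fv) →
      DerivesI (A.subst0 (.var a) :: Γ) S → DerivesI (.ex A :: Γ) S
  | exR {Γ A t} : DerivesI Γ (some (A.subst0 t)) → DerivesI Γ (some (.ex A))
  | conjL {Γ S ι f} (i : ι) : DerivesI (f i :: Γ) S → DerivesI (.conj ι f :: Γ) S
  | conjR {Γ ι f} : (∀ i : ι, DerivesI Γ (some (f i))) →
      DerivesI Γ (some (.conj ι f))
  | disjL {Γ S ι f} : (∀ i : ι, DerivesI (f i :: Γ) S) →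
      DerivesI (.disj ι f :: Γ) S
  | disjR {Γ ι f} (i : ι) : DerivesI Γ (some (f i)) → DerivesI Γ (some (.disj ι f))

/-- `⋁(Φ ∪ {A})` for an (indexed) set `Φ` of formulae and a formula `A`. -/
def Fml.disjInsert (A : Fml) {ι : Type} (f : ι → Fml) : Fml :=
  .disj (Option ι) fun o => o.elim A f

/-- `⋁Δ` for a finite list `Δ` of formulae. -/
def Fml.disjList (Δ : List Fml) : Fml :=
  .disj (Fin Δ.length) Δ.get

/-- If `Γ ⊢ ⋁(Φ, B)` and `Γ ⊢ ⋁(Φ, C)` are derivable intuitionistically, then so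
is `Γ ⊢ ⋁(Φ, B ∧ C)`. -/
theorem disjInsert_andR (Γ : List Fml) (ι : Type) (f : ι → Fml) (B C : Fml)
    (hB : DerivesI Γ (some (Fml.disjInsert B f)))
    (hC : DerivesI Γ (some (Fml.disjInsert C f))) :
    DerivesI Γ (some (Fml.disjInsert (Fml.and B C) f)) := by
  refine DerivesI.cut hB ?_
  unfold Fml.disjInsert
  apply DerivesI.disjL
  rintro (_ | i)
  · -- B :: Γ ⊢ disj (B ∧ C)
    refine DerivesI.cut (DerivesI.wk (fun A h => List.mem_cons_of_mem _ h) hC) ?_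
    apply DerivesI.disjL
    rintro (_ | i)
    · exact DerivesI.disjR none
        (DerivesI.andR (DerivesI.ax (by simp)) (DerivesI.ax (by simp)))
    · exact DerivesI.disjR (some i) (DerivesI.ax (by simp))
  · exact DerivesI.disjR (some i) (DerivesI.ax (by simp))
end

section
/- If Γ, B ⊢ ⋁Φ and Γ ⊢ ⋁(Φ ∪ {A}) are derivable intuitionistically, then Γ, A → B ⊢ ⋁Φ is derivable intuitionistically. -/
/-! Cut against `Γ ⊢ ⋁(Φ ∪ {A})` and split the resulting disjunction on the left: a disjunct
from `Φ` proves `⋁Φ` outright, while the new disjunct `A` fires `A → B`, reducing to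
`Γ, B ⊢ ⋁Φ`. -/

namespace DerivesI

theorem mono {Γ Γ' : List Fml} {S : Option Fml} (hΓ : Γ ⊆ Γ') (h : DerivesI Γ S) :
    DerivesI Γ' S :=
  .wk (fun _ hA => hΓ hA) h

theorem disjInsert_elim {Γ : List Fml} {S : Option Fml} {A : Fml} {ι : Type} {f : ι → Fml}
    (h : DerivesI Γ (some (A.disjInsert f))) (hA : DerivesI (A :: Γ) S)
    (hf : ∀ i, DerivesI (f i :: Γ) S) : DerivesI Γ S :=
  .cut h (.disjL fun | none => hA | some i => hf i)

end DerivesI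

/-- If `Γ, B ⊢ ⋁Φ` and `Γ ⊢ ⋁(Φ, A)` are derivable intuitionistically, then so is
`Γ, A → B ⊢ ⋁Φ`. -/
theorem disjInsert_impL (Γ : List Fml) (ι : Type) (f : ι → Fml) (A B : Fml)
    (h₁ : DerivesI (B :: Γ) (some (Fml.disj ι f)))
    (h₂ : DerivesI Γ (some (Fml.disjInsert A f))) :
    DerivesI (Fml.imp A B :: Γ) (some (Fml.disj ι f)) := by
  have hA : DerivesI (A :: .imp A B :: Γ) (some (.disj ι f)) :=
    (DerivesI.impL (.ax List.mem_cons_self)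
      (h₁.mono (List.cons_subset_cons B (List.subset_cons_self A Γ)))).mono
      (List.Perm.swap A (.imp A B) Γ).subset
  exact (h₂.mono (List.subset_cons_self _ Γ)).disjInsert_elim hA
    fun i => .disjR i (.ax List.mem_cons_self)
end
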